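/- arXiv:1304.2172 — 2 statements merged into one kernel-verified Lean document; each statement's English description precedes it below -/
import Mathlib

section
/- For pmf's P, Q on a finite alphabet 𝒳 and c > 0, h_c(P,Q) ≤ D(P‖Q), with equality if and only if P = Q. -/
open Finset Filter Topology
open scoped Classical

/-- Kullback-Leibler divergence (base-2 logarithm) on a finite alphabet. -/
noncomputable def klDiv {X : Type*} [Fintype X] (P Q : X → ℝ) : ℝ :=
  ∑ a, P a * Real.logb 2 (P a / Q a)

/-- `P` is a probability mass function on the finite alphabet `X`. -/
def IsPmf {X : Type*} [Fintype X] (P : X → ℝ) : Prop :=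
  (∀ a, 0 ≤ P a) ∧ ∑ a, P a = 1

/-- Empirical pmf (type) of a sequence. -/
noncomputable def empPmf {X : Type*} [Fintype X] [DecidableEq X] {n : ℕ}
    (x : Fin n → X) (a : X) : ℝ :=
  ((Finset.univ.filter (fun i => x i = a)).card : ℝ) / n

/-- The mixture `U = P/(1+c) + cQ/(1+c)`. -/
noncomputable def mixPmf {X : Type*} (c : ℝ) (P Q : X → ℝ) : X → ℝ :=
  fun a => P a / (1 + c) + c * Q a / (1 + c)

/-- Generalized log-likelihood ratio function `h_c`. -/
noncomputable def hGen {X : Type*} [Fintype X] (c : ℝ) (P Q : X → ℝ) : ℝ :=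
  klDiv P (mixPmf c P Q) + c * klDiv Q (mixPmf c P Q)

/-- Shannon entropy (base 2). -/
noncomputable def shannonEntropy {X : Type*} [Fintype X] (P : X → ℝ) : ℝ :=
  -∑ a, P a * Real.logb 2 (P a)

/-!
Splitting the logarithms with `(1 + c) U = P + c Q` gives the identity
`h_c(P, Q) = D(P‖Q) - (1 + c) D(U‖Q)`. As `U` and `Q` have the same total mass,
`D(U‖Q) log 2 = ∑ Q klFun (U / Q)` with `klFun x = x log x + 1 - x ≥ 0`, which vanishes only
at `x = 1`; so `D(U‖Q) ≥ 0`, with equality iff `U = Q`, i.e. iff `P = Q`.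
-/

open Real
open InformationTheory (klFun klFun_apply klFun_nonneg klFun_eq_zero_iff)

lemma mul_logb_div_eq_sub {b p u : ℝ} (hu : u ≠ 0) :
    p * logb b (p / u) = p * logb b p - p * logb b u := by
  rcases eq_or_ne p 0 with rfl | hp
  · simp
  · rw [logb_div hp hu, mul_sub]

lemma mul_klFun_div {u q : ℝ} (hq : q ≠ 0) :
    q * klFun (u / q) = u * log (u / q) + q - u := by
  rw [klFun_apply]
  field_simp

lemma mul_klFun_div_nonneg {u q : ℝ} (hu : 0 ≤ u) (hq : 0 < q) : 0 ≤ q * klFun (u / q) :=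
  mul_nonneg hq.le (klFun_nonneg (div_nonneg hu hq.le))

section Gibbs

variable {X : Type*} [Fintype X] {U Q : X → ℝ}

lemma klDiv_eq_sum_mul_klFun (hQ : ∀ a, Q a ≠ 0) (hsum : ∑ a, U a = ∑ a, Q a) :
    klDiv U Q = (∑ a, Q a * klFun (U a / Q a)) / log 2 := by
  simp_rw [mul_klFun_div (hQ _), sum_sub_distrib, sum_add_distrib, hsum, add_sub_cancel_right,
    klDiv, logb, ← mul_div_assoc, sum_div]

lemma klDiv_nonneg (hU : ∀ a, 0 ≤ U a) (hQ : ∀ a, 0 < Q a) (hsum : ∑ a, U a = ∑ a, Q a) :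
    0 ≤ klDiv U Q := by
  rw [klDiv_eq_sum_mul_klFun (fun a => (hQ a).ne') hsum]
  exact div_nonneg (sum_nonneg fun a _ => mul_klFun_div_nonneg (hU a) (hQ a))
    (log_pos one_lt_two).le

lemma klDiv_eq_zero_iff (hU : ∀ a, 0 ≤ U a) (hQ : ∀ a, 0 < Q a)
    (hsum : ∑ a, U a = ∑ a, Q a) :
    klDiv U Q = 0 ↔ U = Q := by
  have hterm : ∀ a, Q a * klFun (U a / Q a) = 0 ↔ U a = Q a := fun a => by
    rw [mul_eq_zero, or_iff_right (hQ a).ne', klFun_eq_zero_iff (div_nonneg (hU a) (hQ a).le),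
      div_eq_one_iff_eq (hQ a).ne']
  rw [klDiv_eq_sum_mul_klFun (fun a => (hQ a).ne') hsum, div_eq_zero_iff,
    or_iff_left (log_pos one_lt_two).ne',
    sum_eq_zero_iff_of_nonneg fun a _ => mul_klFun_div_nonneg (hU a) (hQ a)]
  simp only [mem_univ, true_implies, hterm, funext_iff]

end Gibbs

section Mixture

variable {X : Type*} {c : ℝ} {P Q : X → ℝ}

lemma one_add_mul_mixPmf (hc : 1 + c ≠ 0) (a : X) :
    (1 + c) * mixPmf c P Q a = P a + c * Q a := by
  simp only [mixPmf]
  field_simp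

lemma mixPmf_pos (hc : 0 < c) (hP : ∀ a, 0 ≤ P a) (hQ : ∀ a, 0 < Q a) (a : X) :
    0 < mixPmf c P Q a := by
  simp only [mixPmf]
  have := hP a
  have := hQ a
  positivity

lemma mixPmf_eq_right_iff (hc : 1 + c ≠ 0) : mixPmf c P Q = Q ↔ P = Q := by
  simp only [funext_iff]
  refine forall_congr' fun a => ?_
  rw [← mul_right_inj' hc, one_add_mul_mixPmf hc]
  constructor <;> intro h <;> linarith

lemma sum_mixPmf [Fintype X] (hc : 1 + c ≠ 0) (hsum : ∑ a, P a = ∑ a, Q a) :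
    ∑ a, mixPmf c P Q a = ∑ a, Q a := by
  rw [← mul_right_inj' hc, mul_sum]
  simp_rw [one_add_mul_mixPmf hc, sum_add_distrib, ← mul_sum, hsum]
  ring

lemma hGen_eq_klDiv_sub [Fintype X] (hc : 0 < c) (hP : ∀ a, 0 ≤ P a) (hQ : ∀ a, 0 < Q a) :
    hGen c P Q = klDiv P Q - (1 + c) * klDiv (mixPmf c P Q) Q := by
  simp only [hGen, klDiv, mul_sum, ← sum_add_distrib, ← sum_sub_distrib]
  refine sum_congr rfl fun a _ => ?_
  have hU := (mixPmf_pos hc hP hQ a).ne'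
  rw [mul_logb_div_eq_sub hU, mul_logb_div_eq_sub hU, mul_logb_div_eq_sub (hQ a).ne',
    mul_logb_div_eq_sub (hQ a).ne']
  linear_combination (logb 2 (mixPmf c P Q a) - logb 2 (Q a)) *
    one_add_mul_mixPmf (by linarith) (P := P) (Q := Q) a

end Mixture

theorem stmt5 {X : Type*} [Fintype X] (c : ℝ) (hc : 0 < c)
    (P Q : X → ℝ) (hP : IsPmf P) (hQ : IsPmf Q) (hQpos : ∀ a, 0 < Q a) :
    hGen c P Q ≤ klDiv P Q ∧ (hGen c P Q = klDiv P Q ↔ P = Q) := by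
  have hc' : 1 + c ≠ 0 := by linarith
  have hUsum : ∑ a, mixPmf c P Q a = ∑ a, Q a := sum_mixPmf hc' (hP.2.trans hQ.2.symm)
  have hU : ∀ a, 0 ≤ mixPmf c P Q a := fun a => (mixPmf_pos hc hP.1 hQpos a).le
  have hD := klDiv_nonneg hU hQpos hUsum
  rw [hGen_eq_klDiv_sub hc hP.1 hQpos, ← mixPmf_eq_right_iff hc',
    ← klDiv_eq_zero_iff hU hQpos hUsum, sub_eq_self, mul_eq_zero, or_iff_right hc']
  exact ⟨sub_le_self _ (mul_nonneg (by linarith) hD), Iff.rfl⟩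
end

section
/- Upper bound on false-negative probability for the training-data game: with N = cn, let Γ^∞(Q) be closed subsets of the simplex indexed by pmf's Q, and suppose Γ^n(Q) ⊆ Γ^∞(Q) for all n and Q ∈ 𝒫_N. Then the quantity P_fn = Σ_{Q ∈ 𝒫_N} P_X(T(Q)) Σ_{P ∈ Γ^n(Q)} P_Y(T(P)) satisfies P_fn ≤ (n+1)^{|𝒳|}(N+1)^{|𝒳|} · 2^{−n · min_Q [c·D(Q‖P_X) + min_{P ∈ Γ^∞(Q)} D(P‖P_Y)]}, where the outer minimum is over all pmf's Q on 𝒳. -/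
open Finset Filter Topology
open scoped Classical

/-!
Change of measure: a sequence `x` of length `n` has probability
`P^n(x) = 2^{-n D(P̂_x ‖ P)} P̂_x^n(x)` under `P`, where `P̂_x` is its type. When the types of `t`
and `y` satisfy the constraint `P̂_y ∈ Γ^n(P̂_t) ⊆ Γ^∞(P̂_t)`, the exponent
`N D(P̂_t ‖ P_X) + n D(P̂_y ‖ P_Y)` is at least `n` times the minimum in the bound. What remains is
`∑_t P̂_t^N(t) · ∑_y P̂_y^n(y)`, and each factor is at most the number of types, since the sequences
of a given type `P` have total `P`-probability at most one.
-/

lemma Real.sInf_le_of_mem_of_nonneg {s : Set ℝ} {a : ℝ} (has : a ∈ s) (ha : 0 ≤ a) :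
    sInf s ≤ a := by
  by_cases hs : BddBelow s
  · exact csInf_le hs has
  · rwa [Real.sInf_of_not_bddBelow hs]

section KullbackLeibler

variable {X : Type*} [Fintype X]

lemma klDiv_nonneg_s16 {P Q : X → ℝ} (hP : ∀ a, 0 ≤ P a) (hQ : ∀ a, 0 < Q a)
    (hPQ : ∑ a, P a = ∑ a, Q a) : 0 ≤ klDiv P Q := by
  have hlog2 : 0 < Real.log 2 := Real.log_pos one_lt_two
  have hterm : ∀ a, Q a * InformationTheory.klFun (P a / Q a)
      = P a * Real.logb 2 (P a / Q a) * Real.log 2 + (Q a - P a) := by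
    intro a
    rw [InformationTheory.klFun_apply, Real.logb, mul_assoc, div_mul_cancel₀ _ hlog2.ne']
    field_simp [(hQ a).ne']
    ring
  have hsum : klDiv P Q * Real.log 2 = ∑ a, Q a * InformationTheory.klFun (P a / Q a) := by
    simp_rw [hterm, sum_add_distrib, sum_sub_distrib, hPQ, sub_self, add_zero, klDiv, sum_mul]
  refine nonneg_of_mul_nonneg_left (hsum ▸ sum_nonneg fun a _ => ?_) hlog2
  exact mul_nonneg (hQ a).le (InformationTheory.klFun_nonneg (div_nonneg (hP a) (hQ a).le))

end KullbackLeibler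

section EmpiricalPmf

variable {X : Type*} [Fintype X] [DecidableEq X] {n : ℕ}

lemma empPmf_nonneg (x : Fin n → X) (a : X) : 0 ≤ empPmf x a := by
  unfold empPmf
  positivity

lemma empPmf_apply_pos (x : Fin n → X) (i : Fin n) : 0 < empPmf x (x i) := by
  have hcard : 0 < #{j | x j = x i} := card_pos.2 ⟨i, by simp⟩
  have hn : 0 < n := i.pos
  unfold empPmf
  positivity

lemma sum_comp_eq_mul_sum_empPmf (x : Fin n → X) (g : X → ℝ) :
    ∑ i, g (x i) = n * ∑ a, empPmf x a * g a := by
  rcases n.eq_zero_or_pos with rfl | hn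
  · simp
  rw [← sum_fiberwise univ x (fun i => g (x i)), mul_sum]
  refine sum_congr rfl fun a _ => ?_
  rw [sum_congr rfl fun i hi => by rw [(mem_filter.1 hi).2], sum_const, nsmul_eq_mul, empPmf,
    ← mul_assoc, mul_div_cancel₀ _ (by positivity)]

lemma sum_empPmf (hn : 0 < n) (x : Fin n → X) : ∑ a, empPmf x a = 1 := by
  have h := sum_comp_eq_mul_sum_empPmf x fun _ => (1 : ℝ)
  simp only [sum_const, card_univ, Fintype.card_fin, nsmul_eq_mul, mul_one] at h
  exact (mul_eq_left₀ (by positivity)).1 h.symm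

lemma isPmf_empPmf (hn : 0 < n) (x : Fin n → X) : IsPmf (empPmf x) :=
  ⟨empPmf_nonneg x, sum_empPmf hn x⟩

lemma prod_eq_rpow_mul_prod_empPmf {f : X → ℝ} (hf : ∀ a, 0 < f a) (x : Fin n → X) :
    ∏ i, f (x i) = 2 ^ (-(n : ℝ) * klDiv (empPmf x) f) * ∏ i, empPmf x (x i) := by
  have hletter : ∀ i, f (x i)
      = 2 ^ (-Real.logb 2 (empPmf x (x i) / f (x i))) * empPmf x (x i) := by
    intro i
    rw [Real.rpow_neg zero_le_two,
      Real.rpow_logb two_pos (by norm_num) (div_pos (empPmf_apply_pos x i) (hf _)), inv_div,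
      div_mul_cancel₀ _ (empPmf_apply_pos x i).ne']
  rw [prod_congr rfl fun i _ => hletter i, prod_mul_distrib, ← Real.rpow_sum_of_pos two_pos,
    sum_comp_eq_mul_sum_empPmf x fun a => -Real.logb 2 (empPmf x a / f a)]
  simp only [klDiv, mul_neg, sum_neg_distrib, neg_mul]

lemma card_image_empPmf_le :
    #(univ.image (empPmf : (Fin n → X) → X → ℝ)) ≤ (n + 1) ^ Fintype.card X := by
  let count : (Fin n → X) → X → Fin (n + 1) := fun x a =>
    ⟨#{i | x i = a}, Nat.lt_succ_of_le ((card_filter_le _ _).trans_eq (by simp))⟩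
  calc #(univ.image (empPmf : (Fin n → X) → X → ℝ))
      = #((univ.image count).image fun v a => ((v a : ℕ) : ℝ) / n) := by
        rw [image_image]
        rfl
    _ ≤ #(univ.image count) := card_image_le
    _ ≤ Fintype.card (X → Fin (n + 1)) := card_le_univ _
    _ = (n + 1) ^ Fintype.card X := by simp

lemma sum_prod_empPmf_le (hn : 0 < n) :
    ∑ x : Fin n → X, ∏ i, empPmf x (x i) ≤ ((n : ℝ) + 1) ^ Fintype.card X := by
  calc ∑ x : Fin n → X, ∏ i, empPmf x (x i)
      = ∑ P ∈ univ.image empPmf, ∑ x with empPmf x = P, ∏ i, P (x i) := by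
        rw [← sum_fiberwise_of_maps_to (g := empPmf) fun x _ => mem_image_of_mem _ (mem_univ x)]
        exact sum_congr rfl fun P _ => sum_congr rfl fun x hx => by rw [(mem_filter.1 hx).2]
    _ ≤ ∑ P ∈ univ.image (empPmf : (Fin n → X) → X → ℝ), 1 := by
        refine sum_le_sum fun P hP => ?_
        obtain ⟨x₀, -, rfl⟩ := mem_image.1 hP
        calc ∑ x with empPmf x = empPmf x₀, ∏ i, empPmf x₀ (x i)
            ≤ ∑ x : Fin n → X, ∏ i, empPmf x₀ (x i) :=
              sum_le_sum_of_subset_of_nonneg (filter_subset _ _) fun x _ _ =>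
                prod_nonneg fun i _ => empPmf_nonneg _ _
          _ = 1 := by rw [← Fintype.sum_pow, sum_empPmf hn, one_pow]
    _ ≤ ((n : ℝ) + 1) ^ Fintype.card X := by
        rw [sum_const, nsmul_one]
        exact_mod_cast card_image_empPmf_le

end EmpiricalPmf

theorem sum_prod_mul_sum_ite_le {X : Type*} [Fintype X] [DecidableEq X] {n N : ℕ}
    (hn : 0 < n) (hN : 0 < N) {PX PY : X → ℝ} (hPX : ∀ a, 0 < PX a) (hPY : ∀ a, 0 < PY a)
    (Γ : (X → ℝ) → Set (X → ℝ)) (m : ℝ)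
    (hm : ∀ (t : Fin N → X) (y : Fin n → X), empPmf y ∈ Γ (empPmf t) →
      n * m ≤ N * klDiv (empPmf t) PX + n * klDiv (empPmf y) PY) :
    (∑ t : Fin N → X, (∏ j, PX (t j)) *
        ∑ y : Fin n → X, if empPmf y ∈ Γ (empPmf t) then (∏ i, PY (y i)) else 0)
      ≤ ((n : ℝ) + 1) ^ Fintype.card X * ((N : ℝ) + 1) ^ Fintype.card X *
        (2 : ℝ) ^ (-(n : ℝ) * m) := by
  have hterm : ∀ (t : Fin N → X) (y : Fin n → X),
      (∏ j, PX (t j)) * (if empPmf y ∈ Γ (empPmf t) then ∏ i, PY (y i) else 0)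
        ≤ (2 : ℝ) ^ (-(n : ℝ) * m) * ((∏ j, empPmf t (t j)) * ∏ i, empPmf y (y i)) := by
    intro t y
    split_ifs with hty
    · rw [prod_eq_rpow_mul_prod_empPmf hPX, prod_eq_rpow_mul_prod_empPmf hPY]
      calc (2 : ℝ) ^ (-(N : ℝ) * klDiv (empPmf t) PX) * (∏ j, empPmf t (t j)) *
            ((2 : ℝ) ^ (-(n : ℝ) * klDiv (empPmf y) PY) * ∏ i, empPmf y (y i))
          = (2 : ℝ) ^ (-(N * klDiv (empPmf t) PX + n * klDiv (empPmf y) PY)) *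
              ((∏ j, empPmf t (t j)) * ∏ i, empPmf y (y i)) := by
            rw [neg_add, Real.rpow_add two_pos]
            ring_nf
        _ ≤ _ := by
            gcongr
            · exact mul_nonneg (prod_nonneg fun j _ => empPmf_nonneg _ _)
                (prod_nonneg fun i _ => empPmf_nonneg _ _)
            · exact one_le_two
            · linarith [hm t y hty]
    · rw [mul_zero]
      exact mul_nonneg (by positivity) (mul_nonneg (prod_nonneg fun j _ => empPmf_nonneg _ _)
        (prod_nonneg fun i _ => empPmf_nonneg _ _))
  calc (∑ t : Fin N → X, (∏ j, PX (t j)) *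
        ∑ y : Fin n → X, if empPmf y ∈ Γ (empPmf t) then (∏ i, PY (y i)) else 0)
      ≤ ∑ t : Fin N → X, ∑ y : Fin n → X,
          (2 : ℝ) ^ (-(n : ℝ) * m) * ((∏ j, empPmf t (t j)) * ∏ i, empPmf y (y i)) := by
        simp_rw [mul_sum]
        exact sum_le_sum fun t _ => sum_le_sum fun y _ => hterm t y
    _ = (2 : ℝ) ^ (-(n : ℝ) * m) * ((∑ t : Fin N → X, ∏ j, empPmf t (t j)) *
          ∑ y : Fin n → X, ∏ i, empPmf y (y i)) := by
        simp_rw [sum_mul_sum, mul_sum]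
    _ ≤ (2 : ℝ) ^ (-(n : ℝ) * m) *
          (((N : ℝ) + 1) ^ Fintype.card X * ((n : ℝ) + 1) ^ Fintype.card X) := by
        gcongr
        · exact sum_nonneg fun y _ => prod_nonneg fun i _ => empPmf_nonneg _ _
        · exact sum_prod_empPmf_le hN
        · exact sum_prod_empPmf_le hn
    _ = _ := by ring

theorem stmt16_general {X : Type*} [Fintype X] [DecidableEq X] {n N : ℕ} (hn : 0 < n) (hN : 0 < N)
    (c : ℝ) (hcn : (N : ℝ) = c * n)
    (PX PY : X → ℝ) (hPX : IsPmf PX) (hPY : IsPmf PY)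
    (hPXpos : ∀ a, 0 < PX a) (hPYpos : ∀ a, 0 < PY a)
    (Γn Γinf : (X → ℝ) → Set (X → ℝ))
    (hsub : ∀ Q, Γn Q ⊆ Γinf Q) :
    (∑ t : Fin N → X, (∏ j, PX (t j)) *
        ∑ y : Fin n → X, if empPmf y ∈ Γn (empPmf t) then (∏ i, PY (y i)) else 0)
      ≤ ((n : ℝ) + 1) ^ (Fintype.card X) * ((N : ℝ) + 1) ^ (Fintype.card X) *
        (2 : ℝ) ^ (-(n : ℝ) * sInf {r : ℝ | ∃ Q : X → ℝ, IsPmf Q ∧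
            r = c * klDiv Q PX + sInf ((fun P => klDiv P PY) '' Γinf Q)}) := by
  refine sum_prod_mul_sum_ite_le hn hN hPXpos hPYpos Γn _ fun t y hty => ?_
  have hDt : 0 ≤ klDiv (empPmf t) PX :=
    klDiv_nonneg_s16 (empPmf_nonneg t) hPXpos (by rw [sum_empPmf hN, hPX.2])
  have hDy : 0 ≤ klDiv (empPmf y) PY :=
    klDiv_nonneg_s16 (empPmf_nonneg y) hPYpos (by rw [sum_empPmf hn, hPY.2])
  have hinner : sInf ((fun P => klDiv P PY) '' Γinf (empPmf t)) ≤ klDiv (empPmf y) PY :=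
    Real.sInf_le_of_mem_of_nonneg ⟨empPmf y, hsub _ hty, rfl⟩ hDy
  -- Without a lower bound the outer `sInf` is the junk value `0`; the divergences are nonnegative.
  by_cases hbdd : BddBelow {r : ℝ | ∃ Q : X → ℝ, IsPmf Q ∧
      r = c * klDiv Q PX + sInf ((fun P => klDiv P PY) '' Γinf Q)}
  · have houter := csInf_le hbdd ⟨empPmf t, isPmf_empPmf hN t, rfl⟩
    rw [hcn]
    nlinarith [(Nat.cast_nonneg n : (0 : ℝ) ≤ n)]
  · rw [Real.sInf_of_not_bddBelow hbdd, mul_zero]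
    positivity

theorem stmt16 {X : Type*} [Fintype X] [DecidableEq X] {n N : ℕ} (hn : 0 < n) (hN : 0 < N)
    (c : ℝ) (hc : 0 < c) (hcn : (N : ℝ) = c * n)
    (PX PY : X → ℝ) (hPX : IsPmf PX) (hPY : IsPmf PY)
    (hPXpos : ∀ a, 0 < PX a) (hPYpos : ∀ a, 0 < PY a)
    (Γn Γinf : (X → ℝ) → Set (X → ℝ))
    (hcl : ∀ Q, IsClosed (Γinf Q)) (hsub : ∀ Q, Γn Q ⊆ Γinf Q) :
    (∑ t : Fin N → X, (∏ j, PX (t j)) *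
        ∑ y : Fin n → X, if empPmf y ∈ Γn (empPmf t) then (∏ i, PY (y i)) else 0)
      ≤ ((n : ℝ) + 1) ^ (Fintype.card X) * ((N : ℝ) + 1) ^ (Fintype.card X) *
        (2 : ℝ) ^ (-(n : ℝ) * sInf {r : ℝ | ∃ Q : X → ℝ, IsPmf Q ∧
            r = c * klDiv Q PX + sInf ((fun P => klDiv P PY) '' Γinf Q)}) :=
  stmt16_general hn hN c hcn PX PY hPX hPY hPXpos hPYpos Γn Γinf hsub
end
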